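/- Density integral recovers the Lebesgue extension: let g be an additive and absolutely continuous interval function on [A,B]. For a Lebesgue measurable set E ⊆ [A,B], define K(I) = g(I)·m(E∩I)/m(I). Then for every sequence of divisions D_n of [A,B] with norms tending to 0, the sums ∑_{I∈D_n} K(I) converge to g(E) = ∫_E g'(x) dx, where g' is the a.e.-derivative of g; in particular the upper and lower density integrals of g over E both equal g(E). -/

import Mathlib

open Filter Finset

/-- A division of the interval `[a, b]` into finitely many non-overlapping
subintervals, given by division points `P 0 = a < P 1 < ⋯ < P n = b`. -/
structure Division (a b : ℝ) where
  n : ℕ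
  P : ℕ → ℝ
  npos : 0 < n
  mono : ∀ i < n, P i < P (i + 1)
  first : P 0 = a
  last : P n = b

/-- The Riemann sum of the interval function `g` over the division `D`. -/
def Division.sum {a b : ℝ} (D : Division a b) (g : ℝ → ℝ → ℝ) : ℝ :=
  ∑ i ∈ Finset.range D.n, g (D.P i) (D.P (i + 1))

/-- `D.normLt e` means that the norm (mesh) of the division `D` is `< e`. -/
def Division.normLt {a b : ℝ} (D : Division a b) (e : ℝ) : Prop :=
  ∀ i < D.n, D.P (i + 1) - D.P i < e

/-- A Riemann succession: a sequence of divisions whose norms tend to `0`. -/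
def IsRiemannSuccession {a b : ℝ} (D : ℕ → Division a b) : Prop :=
  ∀ e > 0, ∃ N, ∀ n ≥ N, (D n).normLt e

open MeasureTheory

/-! The primitive `F(x) = g(A, x)` is absolutely continuous, so `g(I) = ∫_I F'` by the fundamental
theorem of calculus for absolutely continuous functions. The sum `∑ g(I) m(E ∩ I) / m(I)` over a
division `D` is then `∫_A^B F' h`, where `h` is the step function equal to `m(E ∩ I) / m(I)` on
each interval `I` of `D`. Along a Riemann succession these step functions tend to `1_E` almost
everywhere by Lebesgue's density theorem, and they lie in `[0, 1]`, so dominated convergence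
gives `∫_A^B F' h → ∫_E F'`. -/

open Set Topology

lemma Finset.sum_abs_lt_of_forall_subset {ι : Type*} {s : Finset ι} {c : ι → ℝ} {ε : ℝ}
    (h : ∀ t ⊆ s, |∑ i ∈ t, c i| < ε / 2) : ∑ i ∈ s, |c i| < ε := by
  classical
  have hpos := h (s.filter (0 ≤ c ·)) (Finset.filter_subset _ _)
  have hneg := h (s.filter (¬ 0 ≤ c ·)) (Finset.filter_subset _ _)
  rw [← Finset.sum_filter_add_sum_filter_not s (0 ≤ c ·)]
  rw [Finset.sum_congr rfl fun i hi => abs_of_nonneg (Finset.mem_filter.1 hi).2,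
    Finset.sum_congr rfl fun i hi => abs_of_neg (not_le.1 (Finset.mem_filter.1 hi).2),
    Finset.sum_neg_distrib]
  linarith [le_abs_self (∑ i ∈ s with 0 ≤ c i, c i),
    neg_abs_le (∑ i ∈ s with ¬ 0 ≤ c i, c i)]

lemma Set.le_or_le_of_disjoint_Ioc {α : Type*} [LinearOrder α] {a b c d : α}
    (h : Disjoint (Ioc a b) (Ioc c d)) (hab : a < b) (hcd : c < d) : b ≤ c ∨ d ≤ a := by
  rw [Set.Ioc_disjoint_Ioc, min_le_iff, le_max_iff, le_max_iff] at h
  rcases h with (h | h) | h | h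
  · exact absurd h hab.not_ge
  · exact Or.inl h
  · exact Or.inr h
  · exact absurd h hcd.not_ge

namespace IntervalFun

variable {g : ℝ → ℝ → ℝ} {A B : ℝ}

def IsAdditiveOn (g : ℝ → ℝ → ℝ) (A B : ℝ) : Prop :=
  ∀ a x b : ℝ, A ≤ a → a < x → x < b → b ≤ B → g a x + g x b = g a b

def IsAbsContOn (g : ℝ → ℝ → ℝ) (A B : ℝ) : Prop :=
  ∀ ε > (0 : ℝ), ∃ δ > (0 : ℝ), ∀ (m : ℕ) (a b : ℕ → ℝ),
    (∀ i < m, A ≤ a i ∧ a i < b i ∧ b i ≤ B) →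
    (∀ i < m, ∀ j < m, i ≠ j → b i ≤ a j ∨ b j ≤ a i) →
    (∑ i ∈ Finset.range m, (b i - a i)) < δ →
    |∑ i ∈ Finset.range m, g (a i) (b i)| < ε

noncomputable def primitive (g : ℝ → ℝ → ℝ) (A x : ℝ) : ℝ :=
  if A < x then g A x else 0

lemma IsAdditiveOn.primitive_sub (hadd : IsAdditiveOn g A B) {a b : ℝ} (ha : A ≤ a)
    (hab : a < b) (hb : b ≤ B) : primitive g A b - primitive g A a = g a b := by
  rcases ha.eq_or_lt with rfl | ha
  · simp [primitive, hab]
  · simp only [primitive, ha, ha.trans hab, if_true]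
    linarith [hadd A a b le_rfl ha hab hb]

lemma IsAbsContOn.exists_abs_sum_lt {ι : Type*} (hac : IsAbsContOn g A B) {ε : ℝ}
    (hε : 0 < ε) :
    ∃ δ > 0, ∀ (s : Finset ι) (a b : ι → ℝ),
      (∀ i ∈ s, A ≤ a i ∧ a i < b i ∧ b i ≤ B) →
      (s : Set ι).Pairwise (fun i j => b i ≤ a j ∨ b j ≤ a i) →
      ∑ i ∈ s, (b i - a i) < δ → |∑ i ∈ s, g (a i) (b i)| < ε := by
  obtain ⟨δ, hδ, hδε⟩ := hac ε hε
  refine ⟨δ, hδ, fun s a b hmem hdisj hlen => ?_⟩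
  -- enumerate `s` as `e 0, …, e (#s - 1)` to return to the `ℕ`-indexed form of `hac`
  let e : Fin s.card ≃ s := s.equivFin.symm
  let a' (k : ℕ) : ℝ := if hk : k < s.card then a (e ⟨k, hk⟩) else 0
  let b' (k : ℕ) : ℝ := if hk : k < s.card then b (e ⟨k, hk⟩) else 0
  have reindex (φ : ℝ → ℝ → ℝ) :
      ∑ k ∈ Finset.range s.card, φ (a' k) (b' k) = ∑ i ∈ s, φ (a i) (b i) := by
    rw [Finset.sum_range, ← Finset.sum_coe_sort s, ← e.sum_comp]
    simp [a', b']
  have he {k : ℕ} (hk : k < s.card) : a' k = a (e ⟨k, hk⟩) ∧ b' k = b (e ⟨k, hk⟩) := by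
    simp [a', b', hk]
  rw [← reindex g]
  refine hδε _ a' b' (fun k hk => ?_) (fun k hk l hl hkl => ?_)
    (by rwa [reindex (fun x y => y - x)])
  · rw [(he hk).1, (he hk).2]
    exact hmem _ (e _).2
  · rw [(he hk).1, (he hk).2, (he hl).1, (he hl).2]
    refine hdisj (e _).2 (e _).2 fun h => hkl ?_
    simpa using e.injective (Subtype.ext h)

lemma absolutelyContinuousOnInterval_primitive (hAB : A ≤ B) (hadd : IsAdditiveOn g A B)
    (hac : IsAbsContOn g A B) : AbsolutelyContinuousOnInterval (primitive g A) A B := by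
  classical
  rw [absolutelyContinuousOnInterval_iff]
  intro ε hε
  obtain ⟨δ, hδ, hδε⟩ := hac.exists_abs_sum_lt (ι := ℕ) (half_pos hε)
  refine ⟨δ, hδ, fun ⟨n, I⟩ ⟨hmem, hdisj⟩ hlen => ?_⟩
  simp only [uIcc_of_le hAB] at hmem hlen ⊢
  set lo : ℕ → ℝ := fun i => min (I i).1 (I i).2
  set hi : ℕ → ℝ := fun i => max (I i).1 (I i).2
  set s := (Finset.range n).filter fun i => lo i < hi i
  have hdist : ∑ i ∈ Finset.range n, dist (primitive g A (I i).1) (primitive g A (I i).2) =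
      ∑ i ∈ s, |g (lo i) (hi i)| := by
    rw [Finset.sum_filter]
    refine Finset.sum_congr rfl fun i hin => ?_
    obtain ⟨hx, hy⟩ := hmem i hin
    split_ifs with h
    · rw [← hadd.primitive_sub (le_min hx.1 hy.1) h (max_le hx.2 hy.2), dist_comm,
        Real.dist_eq]
      rcases le_total (I i).1 (I i).2 with hle | hle
      · simp [hi, hle]
      · simp [hi, hle, abs_sub_comm]
    · rw [min_lt_max, not_not] at h
      simp [h]
  rw [hdist]
  refine Finset.sum_abs_lt_of_forall_subset fun t ht => hδε t lo hi ?_ ?_ ?_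
  · intro i hin
    obtain ⟨hin, hlt⟩ := Finset.mem_filter.1 (ht hin)
    obtain ⟨hx, hy⟩ := hmem i hin
    exact ⟨le_min hx.1 hy.1, hlt, max_le hx.2 hy.2⟩
  · intro i hin j hj hij
    obtain ⟨hin, hlti⟩ := Finset.mem_filter.1 (ht hin)
    obtain ⟨hj, hltj⟩ := Finset.mem_filter.1 (ht hj)
    exact Set.le_or_le_of_disjoint_Ioc (hdisj hin hj hij) hlti hltj
  · refine lt_of_le_of_lt ?_ hlen
    calc ∑ i ∈ t, (hi i - lo i) ≤ ∑ i ∈ Finset.range n, (hi i - lo i) :=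
          Finset.sum_le_sum_of_subset_of_nonneg (ht.trans (Finset.filter_subset _ _))
            fun i _ _ => sub_nonneg.2 min_le_max
      _ = ∑ i ∈ Finset.range n, dist (I i).1 (I i).2 := by
          simp only [hi, lo, max_sub_min_eq_abs', Real.dist_eq]

end IntervalFun

namespace Division

variable {A B : ℝ} (D : Division A B)

lemma strictMonoOn_P : StrictMonoOn D.P (Set.Iic D.n) := strictMonoOn_Iic_of_lt_succ D.mono

lemma P_mem_Icc {i : ℕ} (hi : i ≤ D.n) : D.P i ∈ Icc A B := by
  have mono := D.strictMonoOn_P.monotoneOn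
  exact ⟨D.first.symm.trans_le (mono (Nat.zero_le D.n) hi (Nat.zero_le i)),
    (mono hi (le_refl D.n) hi).trans_eq D.last⟩

lemma left_le_right (D : Division A B) : A ≤ B := (D.P_mem_Icc le_rfl).1.trans_eq D.last

lemma eq_of_mem_Ioc {i j : ℕ} {x : ℝ} (hi : i < D.n) (hj : j < D.n)
    (hxi : x ∈ Ioc (D.P i) (D.P (i + 1))) (hxj : x ∈ Ioc (D.P j) (D.P (j + 1))) : i = j := by
  have mono := D.strictMonoOn_P.monotoneOn
  by_contra hij
  rcases Nat.lt_or_gt_of_ne hij with h | h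
  · exact (hxi.2.trans (mono hi hj.le h)).not_gt hxj.1
  · exact (hxj.2.trans (mono hj hi.le h)).not_gt hxi.1

lemma exists_mem_Ioc {x : ℝ} (hx : x ∈ Ioc A B) :
    ∃ i < D.n, x ∈ Ioc (D.P i) (D.P (i + 1)) := by
  classical
  have hex : ∃ k, x ≤ D.P k := ⟨D.n, hx.2.trans_eq D.last.symm⟩
  have hpos : Nat.find hex ≠ 0 := fun h => (Nat.find_spec hex).not_gt (by
    rw [h]; exact D.first.trans_lt hx.1)
  refine ⟨Nat.find hex - 1, ?_, not_le.1 (Nat.find_min hex (by omega)), ?_⟩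
  · have := Nat.find_min' hex (hx.2.trans_eq D.last.symm)
    omega
  · rw [Nat.sub_add_cancel (Nat.pos_of_ne_zero hpos)]
    exact Nat.find_spec hex

noncomputable def ratio (E : Set ℝ) (i : ℕ) : ℝ :=
  (volume (E ∩ Ioc (D.P i) (D.P (i + 1)))).toReal / (D.P (i + 1) - D.P i)

noncomputable def density (E : Set ℝ) (x : ℝ) : ℝ :=
  ∑ i ∈ Finset.range D.n, (Ioc (D.P i) (D.P (i + 1))).indicator (fun _ => D.ratio E i) x

variable (E : Set ℝ)

lemma ratio_mem_Icc {i : ℕ} (hi : i < D.n) : D.ratio E i ∈ Set.Icc 0 1 := by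
  have hlen : 0 < D.P (i + 1) - D.P i := sub_pos.2 (D.mono i hi)
  refine ⟨div_nonneg ENNReal.toReal_nonneg hlen.le, (div_le_one hlen).2 ?_⟩
  rw [← ENNReal.toReal_ofReal hlen.le, ← Real.volume_Ioc]
  exact ENNReal.toReal_mono measure_Ioc_lt_top.ne (measure_mono inter_subset_right)

lemma density_eq_ratio {i : ℕ} {x : ℝ} (hi : i < D.n) (hx : x ∈ Ioc (D.P i) (D.P (i + 1))) :
    D.density E x = D.ratio E i := by
  rw [density, Finset.sum_eq_single_of_mem i (Finset.mem_range.2 hi), indicator_of_mem hx]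
  intro j hj hji
  exact indicator_of_notMem (fun hxj => hji (D.eq_of_mem_Ioc (Finset.mem_range.1 hj) hi hxj hx)) _

lemma density_mem_Icc {x : ℝ} (hx : x ∈ Ioc A B) : D.density E x ∈ Set.Icc 0 1 := by
  obtain ⟨i, hi, hxi⟩ := D.exists_mem_Ioc hx
  rw [D.density_eq_ratio E hi hxi]
  exact D.ratio_mem_Icc E hi

lemma measurable_density : Measurable (D.density E) :=
  Finset.measurable_sum _ fun _ _ => measurable_const.indicator measurableSet_Ioc

lemma integral_mul_density {f : ℝ → ℝ} (hf : IntegrableOn f (Ioc A B)) :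
    ∫ x in Ioc A B, f x * D.density E x =
      ∑ i ∈ Finset.range D.n, (∫ x in Ioc (D.P i) (D.P (i + 1)), f x) * D.ratio E i := by
  have hint : IntegrableOn (fun x => f x * D.density E x) (Ioc A B) := by
    refine hf.mul_bdd (c := 1) (D.measurable_density E).aestronglyMeasurable
      ((ae_restrict_mem measurableSet_Ioc).mono fun x hx => ?_)
    obtain ⟨h0, h1⟩ := D.density_mem_Icc E hx
    rwa [Real.norm_of_nonneg h0]
  have hsplit : ∫ x in Ioc A B, f x * D.density E x =
      ∑ i ∈ Finset.range D.n, ∫ x in D.P i..D.P (i + 1), f x * D.density E x := by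
    rw [intervalIntegral.sum_integral_adjacent_intervals, D.first, D.last,
      intervalIntegral.integral_of_le D.left_le_right]
    intro i hi
    exact (intervalIntegrable_iff_integrableOn_Ioc_of_le (D.mono i hi).le).2
      (hint.mono_set (Ioc_subset_Ioc (D.P_mem_Icc hi.le).1 (D.P_mem_Icc hi).2))
  rw [hsplit]
  refine Finset.sum_congr rfl fun i hi => ?_
  have hi := Finset.mem_range.1 hi
  rw [intervalIntegral.integral_of_le (D.mono i hi).le, ← integral_mul_const]
  exact setIntegral_congr_fun measurableSet_Ioc fun x hx => by rw [D.density_eq_ratio E hi hx]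

end Division

namespace IsRiemannSuccession

variable {A B : ℝ} {D : ℕ → Division A B}

lemma tendsto_length (hD : IsRiemannSuccession D) {k : ℕ → ℕ} (hk : ∀ n, k n < (D n).n) :
    Tendsto (fun n => (D n).P (k n + 1) - (D n).P (k n)) atTop (𝓝 0) := by
  refine Metric.tendsto_atTop.2 fun e he => ?_
  obtain ⟨N, hN⟩ := hD e he
  refine ⟨N, fun n hn => ?_⟩
  rw [Real.dist_eq, sub_zero, abs_of_pos (sub_pos.2 ((D n).mono _ (hk n)))]
  exact hN n hn _ (hk n)

lemma ae_tendsto_density (hD : IsRiemannSuccession D) {E : Set ℝ} (hE : MeasurableSet E) :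
    ∀ᵐ x, x ∈ Set.Ioc A B →
      Tendsto (fun n => (D n).density E x) atTop (𝓝 (E.indicator 1 x)) := by
  filter_upwards [(IsUnifLocDoublingMeasure.vitaliFamily volume 1)
    |>.ae_tendsto_measure_inter_div_of_measurableSet hE] with x hx hxAB
  choose k hk hxk using fun n => (D n).exists_mem_Ioc hxAB
  have hlen n : 0 < (D n).P (k n + 1) - (D n).P (k n) := sub_pos.2 ((D n).mono _ (hk n))
  have hIcc : Tendsto (fun n => Set.Icc ((D n).P (k n)) ((D n).P (k n + 1))) atTop
      ((IsUnifLocDoublingMeasure.vitaliFamily volume 1).filterAt x) := by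
    simp only [Real.Icc_eq_closedBall]
    refine IsUnifLocDoublingMeasure.tendsto_closedBall_filterAt volume _ _
      (tendsto_nhdsWithin_iff.2 ⟨?_, Eventually.of_forall fun n => half_pos (hlen n)⟩)
      (Eventually.of_forall fun n => ?_)
    · simpa using (hD.tendsto_length hk).div_const 2
    · rw [one_mul, ← Real.Icc_eq_closedBall]
      exact Set.Ioc_subset_Icc_self (hxk n)
  have hind : (E.indicator (1 : ℝ → ENNReal) x).toReal = E.indicator 1 x := by
    by_cases hxE : x ∈ E <;> simp [hxE]
  rw [← hind]
  refine ((ENNReal.tendsto_toReal ?_).comp (hx.comp hIcc)).congr fun n => ?_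
  · by_cases hxE : x ∈ E <;> simp [hxE]
  · rw [Function.comp_apply, Function.comp_apply, (D n).density_eq_ratio E (hk n) (hxk n),
      Division.ratio, measure_congr ((ae_eq_refl E).inter Ioc_ae_eq_Icc), Real.volume_Icc,
      ENNReal.toReal_div, ENNReal.toReal_ofReal (hlen n).le]

lemma tendsto_sum_integral_mul_ratio (hD : IsRiemannSuccession D) {f : ℝ → ℝ}
    (hf : IntegrableOn f (Set.Ioc A B)) {E : Set ℝ} (hE : MeasurableSet E) :
    Tendsto (fun n => ∑ i ∈ Finset.range (D n).n,
        (∫ x in Set.Ioc ((D n).P i) ((D n).P (i + 1)), f x) * (D n).ratio E i)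
      atTop (𝓝 (∫ x in E ∩ Set.Ioc A B, f x)) := by
  simp only [← Division.integral_mul_density _ _ hf]
  have hlim : ∫ x in Set.Ioc A B, f x * E.indicator 1 x = ∫ x in E ∩ Set.Ioc A B, f x := by
    simp_rw [← indicator_mul_right, Pi.one_apply, mul_one]
    rw [integral_indicator hE, Measure.restrict_restrict hE]
  rw [← hlim]
  refine tendsto_integral_of_dominated_convergence (fun x => ‖f x‖)
    (fun n => hf.aestronglyMeasurable.mul ((D n).measurable_density E).aestronglyMeasurable)
    hf.norm (fun n => ?_) ?_
  · filter_upwards [ae_restrict_mem measurableSet_Ioc] with x hx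
    obtain ⟨h0, h1⟩ := (D n).density_mem_Icc E hx
    rw [norm_mul, Real.norm_of_nonneg h0]
    exact mul_le_of_le_one_right (norm_nonneg _) h1
  · filter_upwards [ae_restrict_of_ae (hD.ae_tendsto_density hE),
      ae_restrict_mem measurableSet_Ioc] with x hx hxAB
    exact (hx hxAB).const_mul (f x)

end IsRiemannSuccession

/-- (III.6.01): Density integral recovers the Lebesgue extension.  Let `g` be an additive
and absolutely continuous interval function on `[A, B]`.  Then `g` is represented by an
integrable a.e.-derivative `g'` (i.e. `g(I) = ∫_I g'`), and for every Lebesgue measurable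
set `E ⊆ [A, B]` and every Riemann succession of divisions `Dₙ` of `[A, B]`, the sums
`∑_{I ∈ Dₙ} g(I)·m(E ∩ I)/m(I)` converge to `g(E) = ∫_E g'(x) dx`; in particular the
upper and lower density integrals of `g` over `E` both equal `g(E)`. -/
theorem density_integral_eq_lebesgue_extension (g : ℝ → ℝ → ℝ) (A B : ℝ) (hAB : A < B)
    (hadd : ∀ a x b : ℝ, A ≤ a → a < x → x < b → b ≤ B → g a x + g x b = g a b)
    (hac : ∀ ε > (0 : ℝ), ∃ δ > (0 : ℝ), ∀ (m : ℕ) (a b : ℕ → ℝ),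
      (∀ i < m, A ≤ a i ∧ a i < b i ∧ b i ≤ B) →
      (∀ i < m, ∀ j < m, i ≠ j → b i ≤ a j ∨ b j ≤ a i) →
      (∑ i ∈ Finset.range m, (b i - a i)) < δ →
      |∑ i ∈ Finset.range m, g (a i) (b i)| < ε) :
    ∃ g' : ℝ → ℝ, IntegrableOn g' (Set.Icc A B) volume ∧
      (∀ a b : ℝ, A ≤ a → a < b → b ≤ B → g a b = ∫ x in Set.Ioc a b, g' x) ∧
      ∀ (E : Set ℝ), MeasurableSet E → E ⊆ Set.Icc A B →
        ∀ D : ℕ → Division A B, IsRiemannSuccession D →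
          Filter.Tendsto
            (fun n => ∑ i ∈ Finset.range (D n).n,
              g ((D n).P i) ((D n).P (i + 1)) *
                (volume (E ∩ Set.Ioc ((D n).P i) ((D n).P (i + 1)))).toReal /
                  ((D n).P (i + 1) - (D n).P i))
            Filter.atTop (nhds (∫ x in E, g' x)) := by
  set F := IntervalFun.primitive g A
  have hF : AbsolutelyContinuousOnInterval F A B :=
    IntervalFun.absolutelyContinuousOnInterval_primitive hAB.le hadd hac
  have hint : IntegrableOn (deriv F) (Set.Ioc A B) := hF.intervalIntegrable_deriv.1
  have hrep : ∀ a b : ℝ, A ≤ a → a < b → b ≤ B →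
      g a b = ∫ x in Set.Ioc a b, deriv F x := by
    intro a b ha hab hb
    have hsub : Set.uIcc a b ⊆ Set.uIcc A B := by
      rw [Set.uIcc_of_le hAB.le, Set.uIcc_of_le hab.le]
      exact Set.Icc_subset_Icc ha hb
    rw [← intervalIntegral.integral_of_le hab.le, (hF.mono hsub).integral_deriv_eq_sub,
      IntervalFun.IsAdditiveOn.primitive_sub hadd ha hab hb]
  refine ⟨deriv F, (integrableOn_Icc_iff_integrableOn_Ioc (by simp)).2 hint, hrep,
    fun E hE hEsub D hD => ?_⟩
  have hEAB : ∫ x in E, deriv F x = ∫ x in E ∩ Set.Ioc A B, deriv F x := by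
    have hE' : (E ∩ Set.Ioc A B : Set ℝ) =ᵐ[volume] (E ∩ Set.Icc A B : Set ℝ) :=
      (ae_eq_refl E).inter Ioc_ae_eq_Icc
    rw [Set.inter_eq_left.2 hEsub] at hE'
    exact setIntegral_congr_set hE'.symm
  rw [hEAB]
  refine (hD.tendsto_sum_integral_mul_ratio hint hE).congr fun n =>
    Finset.sum_congr rfl fun i hi => ?_
  have hi := Finset.mem_range.1 hi
  rw [Division.ratio, ← mul_div_assoc, hrep _ _ ((D n).P_mem_Icc hi.le).1 ((D n).mono i hi)
    ((D n).P_mem_Icc hi).2]
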